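/- Let G be a connected graph on [n], n ≥ 3, that is not complete, with diameter d, and let v be a non-simplicial vertex. If v is neither endpoint of a given diameter-realizing shortest path P: v_1,...,v_{d+1}, then d_{G_v − v}(v_1, v_{d+1}) ≥ d − 1. -/

import Mathlib

open SimpleGraph

def completeNeighborhood {V : Type} (G : SimpleGraph V) (v : V) : SimpleGraph V where
  Adj u w := G.Adj u w ∨ (u ≠ w ∧ G.Adj v u ∧ G.Adj v w)
  symm := by
    refine ⟨?_⟩
    intro a b h
    rcases h with h | ⟨h1, h2, h3⟩
    · exact Or.inl h.symm
    · exact Or.inr ⟨h1.symm, h3, h2⟩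
  loopless := by
    refine ⟨?_⟩
    intro a h
    rcases h with h | ⟨h, -⟩
    · exact G.irrefl h
    · exact h rfl

abbrev deleteVert {V : Type} (G : SimpleGraph V) (x : V) :
    SimpleGraph ({x}ᶜ : Set V) :=
  G.induce ({x}ᶜ : Set V)

def IsSimplicial {V : Type} (G : SimpleGraph V) (v : V) : Prop :=
  G.IsClique (G.neighborSet v)

noncomputable def fval {V : Type} (G : SimpleGraph V) : ℕ :=
  {v | IsSimplicial G v}.ncard

noncomputable def ivval {V : Type} (G : SimpleGraph V) : ℕ :=
  {v | ¬ IsSimplicial G v}.ncard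

noncomputable def dval {V : Type} (G : SimpleGraph V) : ℕ :=
  {v | ∀ u, ¬ G.Adj v u}.ncard +
    ∑ᶠ c : G.ConnectedComponent, (G.induce c.supp).diam

/-!
Every `G`-walk between two vertices other than `v` can be rerouted around `v`: a step `a → v → b`
is replaced by the added edge `ab`. Conversely, a walk in `G_v - v` becomes a `G`-walk once each
added edge `ab` is replaced by `a → v → b`; only one detour through `v` is ever needed, because
after reaching `v` the walk may continue directly with the last detour. Hence deleting `v` from
`G_v` shortens distances of `G` by at most one.
-/

section

variable {V : Type} {G : SimpleGraph V} {v : V}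

lemma reachable_deleteVert_completeNeighborhood_of_walk {z y : V} (W : G.Walk z y)
    (hy : y ≠ v) (x : V) (hx : x ≠ v) (hxz : x = z ∨ G.Adj x z) :
    (deleteVert (completeNeighborhood G v) v).Reachable ⟨x, hx⟩ ⟨y, hy⟩ := by
  induction W generalizing x with
  | nil =>
    rcases hxz with rfl | hxy
    · rfl
    · exact Adj.reachable (Or.inl hxy)
  | @cons z z' y hzz' W ih =>
    rcases hxz with rfl | hxz
    · exact ih hy x hx (Or.inr hzz')
    by_cases hzv : z = v
    · rw [hzv] at hxz hzz'
      by_cases hxz' : x = z'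
      · exact ih hy x hx (Or.inl hxz')
      have hz'v : z' ≠ v := hzz'.ne.symm
      have hadj : (deleteVert (completeNeighborhood G v) v).Adj ⟨x, hx⟩ ⟨z', hz'v⟩ :=
        Or.inr ⟨hxz', hxz.symm, hzz'⟩
      exact hadj.reachable.trans (ih hy z' hz'v (Or.inl rfl))
    · have hadj : (deleteVert (completeNeighborhood G v) v).Adj ⟨x, hx⟩ ⟨z, hzv⟩ := Or.inl hxz
      exact hadj.reachable.trans (ih hy z hzv (Or.inr hzz'))

lemma SimpleGraph.Reachable.deleteVert_completeNeighborhood {x y : ({v}ᶜ : Set V)}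
    (h : G.Reachable x y) : (deleteVert (completeNeighborhood G v) v).Reachable x y :=
  h.elim fun W => reachable_deleteVert_completeNeighborhood_of_walk W y.2 x x.2 (Or.inl rfl)

lemma exists_walk_le_or_exists_walks_via_center {x y : ({v}ᶜ : Set V)}
    (W : (deleteVert (completeNeighborhood G v) v).Walk x y) :
    (∃ W' : G.Walk x y, W'.length ≤ W.length) ∨
      ∃ (a : G.Walk x v) (b : G.Walk v y), a.length + b.length ≤ W.length + 1 := by
  induction W with
  | nil => exact Or.inl ⟨Walk.nil, le_rfl⟩
  | @cons x z y hxz W ih =>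
    have hxz : G.Adj x z ∨ ((x : V) ≠ z ∧ G.Adj v x ∧ G.Adj v z) := hxz
    rw [Walk.length_cons]
    rcases hxz, ih with ⟨hxz | ⟨-, hvx, hvz⟩, ⟨W', hW'⟩ | ⟨a, b, hab⟩⟩
    · exact Or.inl ⟨.cons hxz W', by simp only [Walk.length_cons]; omega⟩
    · exact Or.inr ⟨.cons hxz a, b, by simp only [Walk.length_cons]; omega⟩
    · exact Or.inr ⟨.cons hvx.symm .nil, .cons hvz W',
        by simp only [Walk.length_cons, Walk.length_nil]; omega⟩
    · exact Or.inr ⟨.cons hvx.symm .nil, b, by simp only [Walk.length_cons, Walk.length_nil]; omega⟩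

lemma exists_walk_length_le_length_add_one {x y : ({v}ᶜ : Set V)}
    (W : (deleteVert (completeNeighborhood G v) v).Walk x y) :
    ∃ W' : G.Walk x y, W'.length ≤ W.length + 1 := by
  rcases exists_walk_le_or_exists_walks_via_center W with ⟨W', hW'⟩ | ⟨a, b, hab⟩
  · exact ⟨W', by omega⟩
  · exact ⟨a.append b, by rwa [Walk.length_append]⟩

lemma dist_le_dist_deleteVert_completeNeighborhood_add_one (x y : ({v}ᶜ : Set V)) :
    G.dist x y ≤ (deleteVert (completeNeighborhood G v) v).dist x y + 1 := by
  by_cases h : G.Reachable x y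
  · obtain ⟨W, hW⟩ := h.deleteVert_completeNeighborhood.exists_walk_length_eq_dist
    obtain ⟨W', hW'⟩ := exists_walk_length_le_length_add_one W
    exact hW ▸ (G.dist_le W').trans hW'
  · simp [dist_eq_zero_of_not_reachable h]

end

theorem stmt17_general {V : Type} (G : SimpleGraph V)
    (d : ℕ)
    (v : V)
    (p : ℕ → V)
    (hdist : G.dist (p 0) (p d) = d)
    (hmem0 : p 0 ∈ ({v}ᶜ : Set V)) (hmemd : p d ∈ ({v}ᶜ : Set V)) :
    d - 1 ≤ (deleteVert (completeNeighborhood G v) v).dist ⟨p 0, hmem0⟩ ⟨p d, hmemd⟩ := by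
  have h : G.dist (p 0) (p d) ≤ _ :=
    dist_le_dist_deleteVert_completeNeighborhood_add_one (G := G) ⟨p 0, hmem0⟩ ⟨p d, hmemd⟩
  omega

/-- if `v` is a non-simplicial vertex which is not an endpoint of a
shortest path `p 0, …, p d` realizing the diameter `d` of a connected non-complete
graph `G` on at least 3 vertices, then `d_{G_v - v}(p 0, p d) ≥ d - 1`. -/
theorem stmt17 {V : Type} [Fintype V] [DecidableEq V] (G : SimpleGraph V)
    (hcard : 3 ≤ Fintype.card V)
    (hconn : G.Connected) (hnc : G ≠ ⊤) (d : ℕ) (hdiam : G.diam = d)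
    (v : V) (hv : ¬ IsSimplicial G v)
    (p : ℕ → V)
    (hadj : ∀ i < d, G.Adj (p i) (p (i + 1)))
    (hinj : ∀ i ≤ d, ∀ j ≤ d, p i = p j → i = j)
    (hdist : G.dist (p 0) (p d) = d)
    (hv0 : v ≠ p 0) (hvd : v ≠ p d)
    (hmem0 : p 0 ∈ ({v}ᶜ : Set V)) (hmemd : p d ∈ ({v}ᶜ : Set V)) :
    d - 1 ≤ (deleteVert (completeNeighborhood G v) v).dist ⟨p 0, hmem0⟩ ⟨p d, hmemd⟩ :=
  stmt17_general G d v p hdist hmem0 hmemd
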